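/- Define the Stirling function S(A; n, k) = ∑_{s ∈ S_n, γ(s) = k} ∏_{i=1}^n a_{i,s(i)}. Then for n ≥ 2 and k ≥ 1, S(A; n, k) = a_{11} S(Ā_{11}; n−1, k−1) + ∑_{j=2}^n a_{1j} S(Ā_{1j}; n−1, k). -/

import Mathlib

/-! Split the permutations `s` of `Fin (n + 2)` by `p = s 0`: `Perm.decomposeFin` writes
`s = swap 0 p * (id ⊕ e)` with `e` a permutation of the remaining points, and the diagonal
product of `s` is `A 0 p` times the diagonal product of `e` in `cminor A p`. For `p = 0` the
point `0` is an extra fixed point, so `s` has one cycle more than `e`; for `p ≠ 0` the swap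
inserts the fixed point `0` into the cycle of `p` (or joins it with `p` into a transposition
if `p` is fixed), so `s` and `e` have the same number of cycles. -/

open Matrix BigOperators

/-- Number of cycles of a permutation, counting fixed points as cycles of length 1. -/
def cycleCount {n : ℕ} (s : Equiv.Perm (Fin n)) : ℕ :=
  Multiset.card s.cycleType + (n - s.support.card)

/-- The Stirling function `S(A; n, k)`: sum of diagonal products over permutations
with exactly `k` cycles. -/
def stirlingFn {R : Type*} [CommRing R] {m : ℕ} (A : Matrix (Fin m) (Fin m) R)
    (k : ℕ) : R :=
  ∑ s ∈ Finset.univ.filter (fun s : Equiv.Perm (Fin m) => cycleCount s = k),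
    ∏ i, A i (s i)

/-- The combinatorial minor matrix `Ā_{1j}`. -/
def cminor {R : Type*} [CommRing R] {n : ℕ}
    (A : Matrix (Fin (n + 1)) (Fin (n + 1)) R) (j : Fin (n + 1)) :
    Matrix (Fin n) (Fin n) R :=
  fun i k => A i.succ (if (k : ℕ) + 1 = (j : ℕ) then 0 else k.succ)

open Equiv Equiv.Perm Finset

namespace Equiv.Perm

variable {α : Type*} [DecidableEq α]

theorem swap_mul_apply_of_ne_of_ne {c : Perm α} {a b x : α} (hca : c a = a) (hx : x ≠ a)
    (hcx : c x ≠ b) : (swap a b * c) x = c x :=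
  swap_apply_of_ne_of_ne (fun h => hx (c.injective (h.trans hca.symm))) hcx

variable [Fintype α]

theorem card_parts_partition_add_card_support (σ : Perm α) :
    σ.partition.parts.card + #σ.support = σ.cycleType.card + Fintype.card α := by
  rw [parts_partition, Multiset.card_add, Multiset.card_replicate]
  have := σ.support.card_le_univ
  omega

theorem Disjoint.card_parts_partition_mul {f g : Perm α} (h : f.Disjoint g) :
    (f * g).partition.parts.card + Fintype.card α =
      f.partition.parts.card + g.partition.parts.card := by
  have hf := card_parts_partition_add_card_support f
  have hg := card_parts_partition_add_card_support g
  have hfg := card_parts_partition_add_card_support (f * g)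
  rw [h.cycleType_mul, Multiset.card_add, h.card_support_mul] at hfg
  omega

theorem IsCycle.card_parts_partition_add_card_support {c : Perm α} (hc : c.IsCycle) :
    c.partition.parts.card + #c.support = Fintype.card α + 1 := by
  rw [Perm.card_parts_partition_add_card_support, hc.cycleType, Multiset.card_singleton,
    add_comm]

theorem card_parts_partition_extendDomain {β : Type*} [Fintype β] [DecidableEq β]
    {p : β → Prop} [DecidablePred p] (f : α ≃ Subtype p) (g : Perm α) :
    (g.extendDomain f).partition.parts.card + Fintype.card α =
      g.partition.parts.card + Fintype.card β := by
  have hg := card_parts_partition_add_card_support g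
  have hext := card_parts_partition_add_card_support (g.extendDomain f)
  rw [cycleType_extendDomain, card_support_extend_domain] at hext
  omega

section SwapMul

variable {c : Perm α} {a b : α}

theorem support_swap_mul_of_mem_of_notMem (hb : b ∈ c.support) (ha : a ∉ c.support) :
    (swap a b * c).support = insert a c.support := by
  have hca : c a = a := notMem_support.mp ha
  have hab : a ≠ b := by rintro rfl; exact ha hb
  set d := swap a b * c
  have hda : d a = b := by simp [d, hca]
  have hdb : d b = c b := swap_mul_apply_of_ne_of_ne hca hab.symm (mem_support.mp hb)
  have hdda : d (d a) ≠ a := by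
    rw [hda, hdb]
    exact fun h => hab (c.injective (h.trans hca.symm)).symm
  -- cutting `a` out of its `d`-cycle gives back `c`
  have hc : swap a (d a) * d = c := by rw [hda, swap_mul_self_mul]
  have := support_swap_mul_eq d a hdda
  rw [hc] at this
  rw [this, sdiff_singleton_eq_erase, insert_erase (mem_support.mpr (by rw [hda]; exact hab.symm))]

theorem IsCycle.swap_mul_of_mem_of_notMem (hc : c.IsCycle) (hb : b ∈ c.support)
    (ha : a ∉ c.support) : (swap a b * c).IsCycle := by
  have hca : c a = a := notMem_support.mp ha
  have hab : a ≠ b := by rintro rfl; exact ha hb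
  set d := swap a b * c
  have hda : d a = b := by simp [d, hca]
  -- `d` runs along the `c`-orbit of `b`, detouring through `a` just before returning to `b`
  have hsame : ∀ i : ℕ, d.SameCycle a ((c ^ i) b) := by
    intro i
    induction i with
    | zero => exact ⟨1, by simpa using hda⟩
    | succ i ih =>
      rw [pow_succ', Perm.mul_apply]
      by_cases hcb : c ((c ^ i) b) = b
      · rw [hcb]; exact ⟨1, by simpa using hda⟩
      · have hne : (c ^ i) b ≠ a := fun h => ha (h ▸ pow_apply_mem_support.mpr hb)
        rw [← swap_mul_apply_of_ne_of_ne hca hne hcb]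
        exact ih.trans ⟨1, rfl⟩
  refine ⟨a, by rw [hda]; exact hab.symm, fun y hy => ?_⟩
  rw [← mem_support, support_swap_mul_of_mem_of_notMem hb ha, mem_insert] at hy
  rcases hy with rfl | hy
  · exact SameCycle.refl _ _
  · obtain ⟨i, -, -, rfl⟩ :=
      (hc.sameCycle (mem_support.mp hb) (mem_support.mp hy)).exists_pow_eq c
    exact hsame i

theorem IsCycle.card_parts_partition_swap_mul_of_mem_of_notMem (hc : c.IsCycle)
    (hb : b ∈ c.support) (ha : a ∉ c.support) :
    (swap a b * c).partition.parts.card + 1 = c.partition.parts.card := by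
  have hcard := (insert a c.support).card_le_univ
  have hc' := hc.card_parts_partition_add_card_support
  have hswap := (hc.swap_mul_of_mem_of_notMem hb ha).card_parts_partition_add_card_support
  rw [support_swap_mul_of_mem_of_notMem hb ha, card_insert_of_notMem ha] at hswap
  rw [card_insert_of_notMem ha] at hcard
  omega

end SwapMul

theorem card_parts_partition_swap_mul {g : Perm α} {a b : α} (hab : a ≠ b) (hga : g a = a) :
    (swap a b * g).partition.parts.card + 1 = g.partition.parts.card := by
  have ha : a ∉ g.support := notMem_support.mpr hga
  by_cases hb : b ∈ g.support
  · set c := g.cycleOf b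
    have hcg : c ∈ g.cycleFactorsFinset := cycleOf_mem_cycleFactorsFinset_iff.mpr hb
    set h := g * c⁻¹
    have hhc : h.Disjoint c := disjoint_mul_inv_of_mem_cycleFactorsFinset hcg
    have hg : g = h * c := by simp [h]
    have hbc : b ∈ c.support := mem_support_cycleOf_iff.mpr ⟨SameCycle.refl _ _, hb⟩
    have hac : a ∉ c.support := fun hx => ha (support_cycleOf_le g b hx)
    have hah : a ∉ h.support := fun hx => ha (hg ▸ hhc.support_mul ▸ mem_union_left _ hx)
    have hbh : b ∉ h.support := fun hx => disjoint_left.mp hhc.disjoint_support hx hbc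
    have hswap : (swap a b).Disjoint h := by
      rw [disjoint_iff_disjoint_support, support_swap hab]
      simp [hah, hbh]
    have hh : h.Disjoint (swap a b * c) := by
      rw [disjoint_iff_disjoint_support, support_swap_mul_of_mem_of_notMem hbc hac,
        disjoint_insert_right]
      exact ⟨hah, hhc.disjoint_support⟩
    have hmerge : swap a b * g = h * (swap a b * c) := by
      rw [hg, ← mul_assoc, hswap.commute.eq, mul_assoc]
    have hcycle := (mem_cycleFactorsFinset_iff.mp hcg).1
      |>.card_parts_partition_swap_mul_of_mem_of_notMem hbc hac
    have hsplit := hhc.card_parts_partition_mul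
    have hsplit' := hh.card_parts_partition_mul
    rw [← hg] at hsplit
    rw [hmerge]
    omega
  · have hswap : (swap a b).Disjoint g := by
      rw [disjoint_iff_disjoint_support, support_swap hab]
      simp [ha, hb]
    have hsplit := hswap.card_parts_partition_mul
    have htransp := (isCycle_swap hab).card_parts_partition_add_card_support
    rw [card_support_swap hab] at htransp
    omega

variable {n : ℕ}

theorem decomposeFin_symm_zero (e : Perm (Fin (n + 1))) :
    decomposeFin.symm (0, e) = e.extendDomain (finSuccAboveEquiv 0) := by
  refine Equiv.ext fun x => ?_
  cases x using Fin.cases with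
  | zero => simp [extendDomain_apply_not_subtype]
  | succ i =>
    simpa [finSuccAboveEquiv_apply] using (extendDomain_apply_image e (finSuccAboveEquiv 0) i).symm

theorem decomposeFin_symm_eq_swap_mul (p : Fin (n + 1)) (e : Perm (Fin n)) :
    decomposeFin.symm (p, e) = swap 0 p * decomposeFin.symm (0, e) := by
  ext x
  cases x using Fin.cases <;> simp

end Equiv.Perm

section Fin

variable {n : ℕ}

theorem cycleCount_eq_card_parts_partition (s : Perm (Fin n)) :
    cycleCount s = s.partition.parts.card := by
  simp [cycleCount, parts_partition]

theorem cycleCount_decomposeFin_symm_zero (e : Perm (Fin (n + 1))) :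
    cycleCount (decomposeFin.symm (0, e)) = cycleCount e + 1 := by
  have := card_parts_partition_extendDomain (finSuccAboveEquiv 0) e
  simp only [Fintype.card_fin] at this
  rw [cycleCount_eq_card_parts_partition, cycleCount_eq_card_parts_partition,
    decomposeFin_symm_zero]
  omega

theorem cycleCount_decomposeFin_symm_succ (j : Fin (n + 1)) (e : Perm (Fin (n + 1))) :
    cycleCount (decomposeFin.symm (j.succ, e)) = cycleCount e := by
  have := card_parts_partition_swap_mul (Fin.succ_ne_zero j).symm
    (decomposeFin_symm_apply_zero 0 e)
  rw [← decomposeFin_symm_eq_swap_mul, ← cycleCount_eq_card_parts_partition,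
    ← cycleCount_eq_card_parts_partition, cycleCount_decomposeFin_symm_zero] at this
  omega

end Fin

theorem cminor_apply {R : Type*} [CommRing R] {n : ℕ} (A : Matrix (Fin (n + 2)) (Fin (n + 2)) R)
    (p : Fin (n + 2)) (i k : Fin (n + 1)) : cminor A p i k = A i.succ (swap 0 p k.succ) := by
  cases p using Fin.cases with
  | zero => simp [cminor]
  | succ j =>
    by_cases h : k = j
    · simp [cminor, h]
    · simp [cminor, swap_apply_of_ne_of_ne (Fin.succ_ne_zero k) (Fin.succ_injective _ |>.ne h),
        Fin.val_inj, h]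

theorem prod_apply_decomposeFin_symm {R : Type*} [CommRing R] {n : ℕ}
    (A : Matrix (Fin (n + 2)) (Fin (n + 2)) R) (p : Fin (n + 2)) (e : Perm (Fin (n + 1))) :
    ∏ i, A i (decomposeFin.symm (p, e) i) = A 0 p * ∏ i, cminor A p i (e i) := by
  simp only [Fin.prod_univ_succ (n := n + 1), decomposeFin_symm_apply_zero,
    decomposeFin_symm_apply_succ, cminor_apply]

theorem stirlingFn_eq_sum_mul {R : Type*} [CommRing R] {n : ℕ}
    (A : Matrix (Fin (n + 2)) (Fin (n + 2)) R) (k : ℕ) :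
    stirlingFn A k = ∑ p, A 0 p *
      ∑ e ∈ univ.filter (fun e => cycleCount (decomposeFin.symm (p, e)) = k),
        ∏ i, cminor A p i (e i) := by
  rw [stirlingFn, sum_filter, ← decomposeFin.symm.sum_comp, Fintype.sum_prod_type]
  simp_rw [prod_apply_decomposeFin_symm, mul_sum, sum_filter]

/-- Expansion of the Stirling function over the first row:
`S(A; n, k) = a_{11} S(Ā_{11}; n-1, k-1) + ∑_{j=2}^n a_{1j} S(Ā_{1j}; n-1, k)`. -/
theorem stmt11 {R : Type*} [CommRing R] {n : ℕ} (k : ℕ) (hk : 1 ≤ k)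
    (A : Matrix (Fin (n + 2)) (Fin (n + 2)) R) :
    stirlingFn A k = A 0 0 * stirlingFn (cminor A 0) (k - 1) +
      ∑ j : Fin (n + 1), A 0 j.succ * stirlingFn (cminor A j.succ) k := by
  have hzero (e : Perm (Fin (n + 1))) :
      cycleCount (decomposeFin.symm (0, e)) = k ↔ cycleCount e = k - 1 := by
    rw [cycleCount_decomposeFin_symm_zero]
    omega
  simp_rw [stirlingFn_eq_sum_mul A k, Fin.sum_univ_succ, hzero,
    cycleCount_decomposeFin_symm_succ, stirlingFn]
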